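/- Let P(z_1,...,z_N) be a homogeneous translation invariant symmetric polynomial admitting derived polynomials for fusions of initial segments of variables (sUFC). Then for each a < N, D_{a,1} = S_{a+1} - S_a, where D_{a,1} is the order of vanishing of the derived polynomial P_der(z^{(a)}, z_{a+1},...,z_N) along z^{(a)} = z_{a+1}, and S_a is the minimal total degree of P in z_1,...,z_a. -/

import Mathlib

/-!
Give the auxiliary variables `ξ` weight 0 and the variables `z` weight 1. The coefficient of
`λ ^ m` in the fusion of a homogeneous `P` of degree `d` is then homogeneous of degree `d - m`,
hence both derived polynomials are homogeneous, of degrees `d - S_a` and `d - S_{a+1}`. Passing to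
the center of mass and the difference `w`, and then setting `w = 0`, preserve weights; so fusing
once more lowers the degree by exactly `D`, which gives `D = S_{a+1} - S_a`.

The one nontrivial input is that the coefficient of `λ ^ S_b` does not vanish. By translation
invariance it is the lowest part of `P` in `z_1, …, z_b`, evaluated at coordinates relative to the
fused variable; and that lowest part is itself invariant under translating `z_1, …, z_b` together,
so it survives the constraint `∑ ξ = 0`.
-/

open MvPolynomial

noncomputable section

/-- Variable type for the fusion of the first `a` variables: `Sum.inl i` are the
auxiliary variables `ξ i`, `Sum.inr none` is the fused variable (center of mass)
`z`, and `Sum.inr (some j)` are the untouched variables `z j` for `a ≤ j`. -/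
abbrev FVars (N : ℕ) := Fin N ⊕ Option (Fin N)

/-- The auxiliary variables `ξ i` for `i < a`, with the constraint `∑ ξ i = 0`
imposed by eliminating the last one. -/
def fuseXi (N a : ℕ) (i : Fin N) : MvPolynomial (FVars N) ℂ :=
  if i.val + 1 < a then X (Sum.inl i)
  else -(∑ j ∈ Finset.univ.filter (fun j : Fin N => j.val + 1 < a), X (Sum.inl j))

/-- Fusion substitution `z i = z + λ * ξ i` for `i < a`, where `λ` is the
polynomial variable and `z = X (Sum.inr none)`. -/
def fuse (N a : ℕ) : MvPolynomial (Fin N) ℂ →ₐ[ℂ] Polynomial (MvPolynomial (FVars N) ℂ) :=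
  MvPolynomial.aeval (fun i =>
    if i.val < a then Polynomial.C (X (Sum.inr none)) + Polynomial.X * Polynomial.C (fuseXi N a i)
    else Polynomial.C (X (Sum.inr (some i))))

/-- `Qcoeff N a P m` is the coefficient `Q^m` of `λ^m` in the fusion expansion of `P`. -/
def Qcoeff (N a : ℕ) (P : MvPolynomial (Fin N) ℂ) (m : ℕ) : MvPolynomial (FVars N) ℂ :=
  (fuse N a P).coeff m

/-- `minDeg N P a` is `S_a`: the minimal total degree of `P` in `z 1, ..., z a`. -/
def minDeg (N : ℕ) (P : MvPolynomial (Fin N) ℂ) (a : ℕ) : ℕ :=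
  sInf {d | ∃ mo ∈ P.support, d = ∑ i ∈ Finset.univ.filter (fun i : Fin N => i.val < a), mo i}

/-- Translation invariance of a multivariate polynomial. -/
def TransInv (N : ℕ) (P : MvPolynomial (Fin N) ℂ) : Prop :=
  ∀ c : ℂ, MvPolynomial.aeval (fun i : Fin N => X i + MvPolynomial.C c) P = P

/-- Symmetry of a multivariate polynomial. -/
def SymmPoly (N : ℕ) (P : MvPolynomial (Fin N) ℂ) : Prop :=
  ∀ σ : Equiv.Perm (Fin N), rename ⇑σ P = P

namespace MvPolynomial

section WeightedHomogeneous

variable {R M σ τ : Type*} [CommSemiring R] [AddCommMonoid M]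

theorem isWeightedHomogeneous_X_of_eq {w : σ → M} {i : σ} {m : M} (h : w i = m) :
    (X i : MvPolynomial σ R).IsWeightedHomogeneous w m :=
  h ▸ isWeightedHomogeneous_X R w i

theorem IsWeightedHomogeneous.aeval {w : τ → M} {w' : σ → M} {g : σ → MvPolynomial τ R}
    (hg : ∀ i, (g i).IsWeightedHomogeneous w (w' i)) {p : MvPolynomial σ R} {m : M}
    (hp : p.IsWeightedHomogeneous w' m) : (aeval g p).IsWeightedHomogeneous w m := by
  induction hp using IsWeightedHomogeneous.induction_on with
  | zero => simpa using isWeightedHomogeneous_zero R w m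
  | add p q _ _ hp hq => simpa using hp.add hq
  | monomial d r hd =>
    rw [aeval_monomial, ← hd, Finsupp.weight_apply, Finsupp.prod, Finsupp.sum, algebraMap_eq]
    exact (IsWeightedHomogeneous.prod _ _ _ fun i _ => (hg i).pow (d i)).C_mul r

theorem weightedHomogeneousComponent_aeval [DecidableEq M] {w : τ → M} {w' : σ → M}
    {g : σ → MvPolynomial τ R} (hg : ∀ i, (g i).IsWeightedHomogeneous w (w' i))
    (m : M) (p : MvPolynomial σ R) :
    weightedHomogeneousComponent w m (aeval g p) =
      aeval g (weightedHomogeneousComponent w' m p) := by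
  induction p using MvPolynomial.induction_on' with
  | monomial d r =>
    have hd := isWeightedHomogeneous_monomial w' d r rfl
    rw [weightedHomogeneousComponent_of_mem hd, weightedHomogeneousComponent_of_mem (hd.aeval hg),
      apply_ite (aeval g), map_zero]
  | add p q hp hq => simp only [map_add, hp, hq]

theorem isWeightedHomogeneous_zero_of_forall_mem_vars {w : σ → M} {p : MvPolynomial σ R}
    (h : ∀ i ∈ p.vars, w i = 0) : p.IsWeightedHomogeneous w 0 := by
  intro d hd
  rw [Finsupp.weight_apply, Finsupp.sum]
  refine Finset.sum_eq_zero fun i hi => ?_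
  rw [h i ((mem_vars_iff_mem_support i).mpr ⟨d, mem_support_iff.mpr hd, hi⟩), smul_zero]

theorem coeff_aeval_X_pow_mul_C (w : σ → ℕ) (p : MvPolynomial σ R) (m : ℕ) :
    (aeval (fun i => Polynomial.X ^ w i * Polynomial.C (X i)) p).coeff m =
      weightedHomogeneousComponent w m p := by
  classical
  induction p using MvPolynomial.induction_on' with
  | monomial d r =>
    have : aeval (fun i => Polynomial.X ^ w i * Polynomial.C (X i)) (monomial d r) =
        Polynomial.monomial (Finsupp.weight w d) (monomial d r) := by
      rw [aeval_monomial, Finsupp.prod, ← Polynomial.C_mul_X_pow_eq_monomial, monomial_eq,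
        Finsupp.prod, Finsupp.weight_apply, Finsupp.sum]
      simp only [mul_pow, ← pow_mul', Finset.prod_mul_distrib, Finset.prod_pow_eq_pow_sum,
        ← Polynomial.C_pow, ← map_prod, map_mul, smul_eq_mul, Polynomial.algebraMap_apply,
        algebraMap_eq]
      ring
    rw [this, Polynomial.coeff_monomial, weightedHomogeneousComponent_of_mem
      (isWeightedHomogeneous_monomial w d r rfl)]
    exact if_congr eq_comm rfl rfl
  | add p q hp hq => simp only [map_add, Polynomial.coeff_add, hp, hq]

end WeightedHomogeneous

theorem IsWeightedHomogeneous.exists_of_mul_left {R M σ : Type*} [CommRing R] [IsDomain R]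
    [AddCancelCommMonoid M] {w : σ → M} {p q : MvPolynomial σ R} {m n : M}
    (hq : q.IsWeightedHomogeneous w m) (hq0 : q ≠ 0) (hqp : (q * p).IsWeightedHomogeneous w n)
    (hp0 : p ≠ 0) : ∃ k, p.IsWeightedHomogeneous w k ∧ m + k = n := by
  classical
  let _ := weightedGradedAlgebra R w
  have hdeg : ∀ j, weightedHomogeneousComponent w j p ≠ 0 → m + j = n := by
    intro j hj
    by_contra hne
    apply mul_ne_zero hq0 hj
    rw [← weightedDecomposition.decompose'_apply]
    show q * (DirectSum.decompose (weightedHomogeneousSubmodule R w) p j : MvPolynomial σ R) = 0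
    rw [← DirectSum.coe_decompose_mul_add_of_left_mem _
      ((mem_weightedHomogeneousSubmodule _ _ _ _).mpr hq)]
    exact (weightedDecomposition.decompose'_apply R w (q * p) (m + j)).trans
      (hqp.weightedHomogeneousComponent_ne _ hne)
  have hsupp : ∀ d ∈ p.support, m + Finsupp.weight w d = n := fun d hd =>
    hdeg _ fun h0 => mem_support_iff.mp hd <| by
      simpa [h0] using (coeff_weightedHomogeneousComponent (w := w) (Finsupp.weight w d) p d).symm
  obtain ⟨d, hd⟩ := support_nonempty.mpr hp0
  refine ⟨Finsupp.weight w d, fun d' hd' => add_left_cancel (a := m) ?_, hsupp d hd⟩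
  rw [hsupp d' (mem_support_iff.mpr hd'), hsupp d hd]

theorem IsHomogeneous.isWeightedHomogeneous_weightedHomogeneousComponent {R σ : Type*}
    [CommSemiring R] {u v : σ → ℕ} {P : MvPolynomial σ R} {d : ℕ} (hP : P.IsHomogeneous d)
    (huv : ∀ i, u i + v i = 1) (m : ℕ) :
    (weightedHomogeneousComponent u m P).IsWeightedHomogeneous v (d - m) := by
  classical
  intro e he
  rw [coeff_weightedHomogeneousComponent, ite_ne_right_iff] at he
  have hsplit : Finsupp.weight u e + Finsupp.weight v e = Finsupp.weight 1 e := by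
    simp only [Finsupp.weight_apply, ← Finsupp.sum_add, ← smul_add, huv]
    rfl
  have := hP he.2
  omega

end MvPolynomial

section TranslationInvariance

variable {N : ℕ} {P : MvPolynomial (Fin N) ℂ}

theorem TransInv.aeval_X_some_add_X_none (hTI : TransInv N P) :
    aeval (fun i => X (some i) + X none : Fin N → MvPolynomial (Option (Fin N)) ℂ) P =
      rename some P :=
  MvPolynomial.funext fun x => by
    have h := congrArg (aeval (x ∘ some)) (hTI (x none))
    rw [comp_aeval_apply] at h
    change aeval x _ = aeval x _
    rw [comp_aeval_apply, aeval_rename]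
    simpa using h

theorem TransInv.aeval_add {A : Type*} [CommRing A] [Algebra ℂ A] (hTI : TransInv N P)
    (t : Fin N → A) (s : A) : aeval (fun i => t i + s) P = aeval t P := by
  have h := congrArg (aeval fun o : Option (Fin N) => o.elim s t) hTI.aeval_X_some_add_X_none
  rw [comp_aeval_apply, aeval_rename] at h
  simp only [map_add, aeval_X] at h
  exact h

end TranslationInvariance

section Fusion

variable {N : ℕ} {P : MvPolynomial (Fin N) ℂ}

def zWeight (N : ℕ) : FVars N → ℕ := Sum.elim (fun _ => 0) (fun _ => 1)

def headWeight (N b : ℕ) (i : Fin N) : ℕ := if i.val < b then 1 else 0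

def tailWeight (N b : ℕ) (i : Fin N) : ℕ := if i.val < b then 0 else 1

def relCoord (N b : ℕ) (i : Fin N) : MvPolynomial (FVars N) ℂ :=
  if i.val < b then fuseXi N b i else X (Sum.inr (some i)) - X (Sum.inr none)

theorem fuse_eq_aeval_relCoord (hTI : TransInv N P) (b : ℕ) :
    fuse N b P =
      aeval (fun i => Polynomial.X ^ headWeight N b i * Polynomial.C (relCoord N b i)) P := by
  have h := hTI.aeval_add (fun i => (Polynomial.X ^ headWeight N b i *
    Polynomial.C (relCoord N b i) : Polynomial (MvPolynomial (FVars N) ℂ)))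
    (Polynomial.C (X (Sum.inr none)))
  rw [← h, fuse]
  refine congrArg (fun g => aeval g P) (funext fun i => ?_)
  simp only [headWeight, relCoord]
  split_ifs <;> simp [add_comm]

theorem Qcoeff_eq_aeval_relCoord (hTI : TransInv N P) (b m : ℕ) :
    Qcoeff N b P m = aeval (relCoord N b) (weightedHomogeneousComponent (headWeight N b) m P) := by
  have : aeval (fun i => Polynomial.X ^ headWeight N b i * Polynomial.C (relCoord N b i)) =
      (Polynomial.mapAlgHom (aeval (relCoord N b))).comp
        (aeval fun i =>
          Polynomial.X ^ headWeight N b i * Polynomial.C (X i : MvPolynomial (Fin N) ℂ)) := by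
    rw [comp_aeval]
    simp
  rw [Qcoeff, fuse_eq_aeval_relCoord hTI, this, AlgHom.comp_apply, Polynomial.coe_mapAlgHom,
    Polynomial.coeff_map, coeff_aeval_X_pow_mul_C]
  rfl

theorem relCoord_isWeightedHomogeneous (b : ℕ) (i : Fin N) :
    (relCoord N b i).IsWeightedHomogeneous (zWeight N) (tailWeight N b i) := by
  unfold relCoord tailWeight fuseXi
  split_ifs
  · exact isWeightedHomogeneous_X ℂ (zWeight N) (Sum.inl i)
  · exact (IsWeightedHomogeneous.sum _ _ _ fun j _ =>
      isWeightedHomogeneous_X ℂ (zWeight N) (Sum.inl j)).neg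
  · exact (isWeightedHomogeneous_X ℂ (zWeight N) (Sum.inr (some i))).sub
      (isWeightedHomogeneous_X ℂ _ _)

theorem Qcoeff_isWeightedHomogeneous {d : ℕ} (hP : P.IsHomogeneous d) (hTI : TransInv N P)
    (b m : ℕ) :
    (Qcoeff N b P m).IsWeightedHomogeneous (zWeight N) (d - m) := by
  rw [Qcoeff_eq_aeval_relCoord hTI]
  refine (hP.isWeightedHomogeneous_weightedHomogeneousComponent (v := tailWeight N b)
    (fun i => ?_) m).aeval (relCoord_isWeightedHomogeneous b)
  unfold headWeight tailWeight
  split_ifs <;> rfl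

end Fusion

section LowestComponent

variable {N : ℕ} {P : MvPolynomial (Fin N) ℂ}

theorem weight_headWeight (b : ℕ) (d : Fin N →₀ ℕ) :
    Finsupp.weight (headWeight N b) d =
      ∑ i ∈ Finset.univ.filter (fun i : Fin N => i.val < b), d i := by
  rw [Finsupp.weight_eq_sum, Finset.sum_filter]
  simp [headWeight]

theorem minDeg_le_weight {b : ℕ} {d : Fin N →₀ ℕ} (hd : d ∈ P.support) :
    minDeg N P b ≤ Finsupp.weight (headWeight N b) d := by
  rw [weight_headWeight]
  exact Nat.sInf_le ⟨d, hd, rfl⟩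

theorem exists_weight_eq_minDeg (hP : P ≠ 0) (b : ℕ) :
    ∃ d ∈ P.support, Finsupp.weight (headWeight N b) d = minDeg N P b := by
  obtain ⟨d, hd⟩ := support_nonempty.mpr hP
  obtain ⟨d, hd, h⟩ : minDeg N P b ∈ {n | ∃ e ∈ P.support,
      n = ∑ i ∈ Finset.univ.filter (fun i : Fin N => i.val < b), e i} :=
    Nat.sInf_mem ⟨_, d, hd, rfl⟩
  exact ⟨d, hd, by rw [weight_headWeight, h]⟩

theorem minDeg_le_of_isHomogeneous {d : ℕ} (hP : P ≠ 0) (hhom : P.IsHomogeneous d) (b : ℕ) :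
    minDeg N P b ≤ d := by
  obtain ⟨e, he, hmin⟩ := exists_weight_eq_minDeg hP b
  rw [← hmin, ← hhom (mem_support_iff.mp he), Finsupp.weight_eq_sum, Finsupp.weight_eq_sum]
  exact Finset.sum_le_sum fun i _ => by unfold headWeight; split_ifs <;> simp

theorem weightedHomogeneousComponent_minDeg_ne_zero (hP : P ≠ 0) (b : ℕ) :
    weightedHomogeneousComponent (headWeight N b) (minDeg N P b) P ≠ 0 := by
  classical
  obtain ⟨d, hd, hmin⟩ := exists_weight_eq_minDeg hP b
  intro h0
  have := congrArg (coeff d) h0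
  rw [coeff_weightedHomogeneousComponent, if_pos hmin, coeff_zero] at this
  exact mem_support_iff.mp hd this

theorem weightedHomogeneousComponent_eq_zero_of_lt_minDeg {b m : ℕ} (hm : m < minDeg N P b) :
    weightedHomogeneousComponent (headWeight N b) m P = 0 :=
  weightedHomogeneousComponent_eq_zero' _ _ fun _ hd => (hm.trans_le (minDeg_le_weight hd)).ne'

end LowestComponent

section PartialShift

variable {N : ℕ} {P : MvPolynomial (Fin N) ℂ}

def headShift (N b : ℕ) (i : Fin N) : MvPolynomial (Option (Fin N)) ℂ :=
  X (some i) + if i.val < b then X none else 0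

def tailShift (N b : ℕ) (i : Fin N) : MvPolynomial (Option (Fin N)) ℂ :=
  X (some i) - if i.val < b then 0 else X none

theorem TransInv.aeval_headShift (hTI : TransInv N P) (b : ℕ) :
    aeval (headShift N b) P = aeval (tailShift N b) P := by
  refine Eq.trans ?_ (hTI.aeval_add _ (X none))
  refine congrArg (fun g => aeval g P) (funext fun i => ?_)
  unfold headShift tailShift
  split_ifs <;> ring

theorem headShift_isWeightedHomogeneous (b : ℕ) (i : Fin N) :
    (headShift N b i).IsWeightedHomogeneous (fun o => o.elim 1 (headWeight N b))
      (headWeight N b i) := by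
  unfold headShift
  by_cases hi : i.val < b
  · rw [if_pos hi]
    exact (isWeightedHomogeneous_X_of_eq rfl).add (isWeightedHomogeneous_X_of_eq (if_pos hi).symm)
  · rw [if_neg hi, add_zero]
    exact isWeightedHomogeneous_X_of_eq rfl

theorem tailShift_isWeightedHomogeneous (b : ℕ) (i : Fin N) :
    (tailShift N b i).IsWeightedHomogeneous (fun o => o.elim 0 (headWeight N b))
      (headWeight N b i) := by
  unfold tailShift
  by_cases hi : i.val < b
  · rw [if_pos hi, sub_zero]
    exact isWeightedHomogeneous_X_of_eq rfl
  · rw [if_neg hi]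
    exact (isWeightedHomogeneous_X_of_eq rfl).sub (isWeightedHomogeneous_X_of_eq (if_neg hi).symm)

/-- Give `t = X none` weight 1 and `headShift` is homogeneous; give it weight 0 and `tailShift`
is. A monomial of `headShift` applied to the lowest part has weight `S = minDeg N P b` in the first
grading, yet, being a monomial of `aeval (tailShift N b) P`, weight at least `S` in the second: so
it has no factor `t`. -/
theorem TransInv.notMem_vars_aeval_headShift_weightedHomogeneousComponent_minDeg
    (hTI : TransInv N P) (b : ℕ) :
    none ∉ (aeval (headShift N b)
      (weightedHomogeneousComponent (headWeight N b) (minDeg N P b) P)).vars := by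
  classical
  set S := minDeg N P b
  set w₁ : Option (Fin N) → ℕ := fun o => o.elim 1 (headWeight N b)
  set w₀ : Option (Fin N) → ℕ := fun o => o.elim 0 (headWeight N b)
  rw [mem_vars_iff_mem_support]
  rintro ⟨e, he, hnone⟩
  have he₁ : Finsupp.weight w₁ e = S :=
    ((weightedHomogeneousComponent_isWeightedHomogeneous S P).aeval
      (headShift_isWeightedHomogeneous b)) (mem_support_iff.mp he)
  have hcoeff : coeff e (aeval (tailShift N b) P) ≠ 0 := by
    rwa [mem_support_iff,
      ← weightedHomogeneousComponent_aeval (headShift_isWeightedHomogeneous b),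
      coeff_weightedHomogeneousComponent, if_pos he₁, hTI.aeval_headShift] at he
  have he₀ : S ≤ Finsupp.weight w₀ e := by
    by_contra! hlt
    have h := coeff_weightedHomogeneousComponent (w := w₀) (Finsupp.weight w₀ e)
      (aeval (tailShift N b) P) e
    rw [if_pos rfl, weightedHomogeneousComponent_aeval (tailShift_isWeightedHomogeneous b),
      weightedHomogeneousComponent_eq_zero_of_lt_minDeg hlt, map_zero, coeff_zero] at h
    exact hcoeff h.symm
  have hw : Finsupp.weight w₁ e = Finsupp.weight w₀ e + e none := by
    simp only [Finsupp.weight_eq_sum, Fintype.sum_option, w₁, w₀, Option.elim]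
    ring
  rw [Finsupp.mem_support_iff] at hnone
  omega

theorem TransInv.aeval_shift_weightedHomogeneousComponent_minDeg (hTI : TransInv N P) (b : ℕ)
    (c : MvPolynomial (Fin N) ℂ) :
    aeval (fun i => X i + if i.val < b then c else 0)
      (weightedHomogeneousComponent (headWeight N b) (minDeg N P b) P) =
      weightedHomogeneousComponent (headWeight N b) (minDeg N P b) P := by
  have hvars := hTI.notMem_vars_aeval_headShift_weightedHomogeneousComponent_minDeg b
  set Pmin := weightedHomogeneousComponent (headWeight N b) (minDeg N P b) P
  calc aeval (fun i => X i + if i.val < b then c else 0) Pmin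
      = aeval (fun o : Option (Fin N) => o.elim c X) (aeval (headShift N b) Pmin) := by
        rw [comp_aeval_apply]
        simp only [headShift, map_add, aeval_X, apply_ite, map_zero, Option.elim]
    _ = aeval (fun o : Option (Fin N) => o.elim 0 X) (aeval (headShift N b) Pmin) := by
        refine hom_congr_vars (f₁ := (aeval fun o : Option (Fin N) => o.elim c X).toRingHom)
          (f₂ := (aeval fun o : Option (Fin N) => o.elim 0 X).toRingHom) ?_ ?_ rfl
        · exact RingHom.ext fun r => by simp
        · rintro (_ | i) ho -
          · exact absurd ho hvars
          · simp
    _ = Pmin := by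
        rw [comp_aeval_apply]
        simp only [headShift, map_add, aeval_X, apply_ite, Option.elim, ite_self, add_zero,
          aeval_X_left_apply]

end PartialShift

section Recentering

variable {N : ℕ}

def centroid (N b : ℕ) : MvPolynomial (Fin N) ℂ :=
  C (b : ℂ)⁻¹ * ∑ j ∈ Finset.univ.filter (fun j : Fin N => j.val < b), X j

def recenter (N b : ℕ) : FVars N → MvPolynomial (Fin N) ℂ :=
  Sum.elim (fun j => X j - centroid N b) (fun o => o.elim 0 X)

theorem sum_sub_centroid {b : ℕ} (hb : b ≤ N) :
    ∑ j ∈ Finset.univ.filter (fun j : Fin N => j.val < b), (X j - centroid N b) = 0 := by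
  rw [Finset.sum_sub_distrib, Finset.sum_const, Fin.card_filter_val_lt, min_eq_right hb, centroid,
    nsmul_eq_mul, ← mul_assoc, ← map_natCast C, ← map_mul]
  rcases Nat.eq_zero_or_pos b with rfl | hb0
  · simp
  · rw [mul_inv_cancel₀ (by exact_mod_cast hb0.ne'), map_one, one_mul, sub_self]

theorem aeval_recenter_relCoord (b : ℕ) (i : Fin N) :
    aeval (recenter N b) (relCoord N b i) = X i - if i.val < b then centroid N b else 0 := by
  unfold relCoord fuseXi
  split_ifs with hi hi'
  · simp [recenter]
  · have hib : i.val + 1 = b := by omega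
    have hsplit : Finset.univ.filter (fun j : Fin N => j.val < b) =
        insert i (Finset.univ.filter (fun j : Fin N => j.val + 1 < b)) := by
      ext j
      simp only [Finset.mem_filter, Finset.mem_univ, true_and, Finset.mem_insert, Fin.ext_iff]
      omega
    have h := sum_sub_centroid (N := N) (b := b) (by omega)
    rw [hsplit, Finset.sum_insert (by simp; omega)] at h
    simp only [map_neg, map_sum, aeval_X, recenter, Sum.elim_inl]
    linear_combination -h
  · simp [recenter]

end Recentering

/-- `recenter` undoes `relCoord` up to translating `z_1, …, z_b` by their centroid, which the
lowest part of `P` does not see. -/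
theorem Qcoeff_minDeg_ne_zero {N : ℕ} {P : MvPolynomial (Fin N) ℂ} (hP : P ≠ 0)
    (hTI : TransInv N P) (b : ℕ) : Qcoeff N b P (minDeg N P b) ≠ 0 := by
  rw [Qcoeff_eq_aeval_relCoord hTI]
  intro h0
  apply weightedHomogeneousComponent_minDeg_ne_zero hP b
  calc weightedHomogeneousComponent (headWeight N b) (minDeg N P b) P
      = aeval (fun i => X i + if i.val < b then -centroid N b else 0)
          (weightedHomogeneousComponent (headWeight N b) (minDeg N P b) P) :=
        (hTI.aeval_shift_weightedHomogeneousComponent_minDeg b _).symm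
    _ = aeval (recenter N b) (aeval (relCoord N b)
          (weightedHomogeneousComponent (headWeight N b) (minDeg N P b) P)) := by
        rw [comp_aeval_apply]
        refine congrArg (fun g => aeval g _) (funext fun i => ?_)
        rw [aeval_recenter_relCoord]
        split_ifs <;> ring
    _ = 0 := by rw [h0, map_zero]

theorem isWeightedHomogeneous_zWeight_zero {N : ℕ} {R : MvPolynomial (FVars N) ℂ}
    (hR : ∀ v ∈ R.vars, ∃ i, v = Sum.inl i) : R.IsWeightedHomogeneous (zWeight N) 0 :=
  isWeightedHomogeneous_zero_of_forall_mem_vars fun v hv => by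
    obtain ⟨i, rfl⟩ := hR v hv
    rfl

theorem ne_zero_and_isWeightedHomogeneous_of_Qcoeff_minDeg_eq_mul {N b d : ℕ}
    {P : MvPolynomial (Fin N) ℂ} (hP : P ≠ 0) (hhom : P.IsHomogeneous d) (hTI : TransInv N P)
    {R Pder : MvPolynomial (FVars N) ℂ}
    (hR : ∀ v ∈ R.vars, ∃ i, v = Sum.inl i) (hfac : Qcoeff N b P (minDeg N P b) = R * Pder) :
    Pder ≠ 0 ∧ Pder.IsWeightedHomogeneous (zWeight N) (d - minDeg N P b) := by
  have hQ := Qcoeff_minDeg_ne_zero hP hTI b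
  rw [hfac] at hQ
  obtain ⟨k, hk, hdeg⟩ := (isWeightedHomogeneous_zWeight_zero hR).exists_of_mul_left
    (left_ne_zero_of_mul hQ) (hfac ▸ Qcoeff_isWeightedHomogeneous hhom hTI b _)
    (right_ne_zero_of_mul hQ)
  exact ⟨right_ne_zero_of_mul hQ, by rwa [← hdeg, zero_add]⟩

/-- The difference variable `w` is stored in the slot of `z_{a+1}` and the center of mass in the
slot `Sum.inr none`. -/
theorem stmt10_general (N a d : ℕ) (haN : a + 1 ≤ N) (P : MvPolynomial (Fin N) ℂ)
    (hP : P ≠ 0) (hhom : P.IsHomogeneous d) (hTI : TransInv N P)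
    (RA PderA : MvPolynomial (FVars N) ℂ)
    (hRA : ∀ v ∈ RA.vars, ∃ i, v = Sum.inl i)
    (hfacA : Qcoeff N a P (minDeg N P a) = RA * PderA)
    (RA1 PderA1 : MvPolynomial (FVars N) ℂ)
    (hRA1 : ∀ v ∈ RA1.vars, ∃ i, v = Sum.inl i)
    (hfacA1 : Qcoeff N (a + 1) P (minDeg N P (a + 1)) = RA1 * PderA1)
    (D : ℕ) (M : MvPolynomial (FVars N) ℂ)
    (hchi : MvPolynomial.aeval (fun v : FVars N =>
        if v = Sum.inr none then
          X (Sum.inr none) +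
            MvPolynomial.C ((1 : ℂ) / (a + 1)) * X (Sum.inr (some ⟨a, haN⟩))
        else if v = Sum.inr (some ⟨a, haN⟩) then
          X (Sum.inr none) -
            MvPolynomial.C ((a : ℂ) / (a + 1)) * X (Sum.inr (some ⟨a, haN⟩))
        else X v) PderA = X (Sum.inr (some ⟨a, haN⟩)) ^ D * M)
    (hMmax : ¬ (X (Sum.inr (some ⟨a, haN⟩)) : MvPolynomial (FVars N) ℂ) ∣ M)
    (hUFC : ∃ c : ℂ, c ≠ 0 ∧
      MvPolynomial.aeval (fun v : FVars N =>
          if v = Sum.inr (some ⟨a, haN⟩) then 0 else X v) M =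
        MvPolynomial.C c * PderA1) :
    D + minDeg N P a = minDeg N P (a + 1) := by
  set w : FVars N := Sum.inr (some ⟨a, haN⟩)
  obtain ⟨-, hA⟩ :=
    ne_zero_and_isWeightedHomogeneous_of_Qcoeff_minDeg_eq_mul hP hhom hTI hRA hfacA
  obtain ⟨hA1_ne, hA1⟩ :=
    ne_zero_and_isWeightedHomogeneous_of_Qcoeff_minDeg_eq_mul hP hhom hTI hRA1 hfacA1
  have hXM : (X w ^ D * M).IsWeightedHomogeneous (zWeight N) (d - minDeg N P a) := by
    rw [← hchi]
    refine hA.aeval fun v => ?_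
    split_ifs with h₁ h₂
    · subst h₁
      exact (isWeightedHomogeneous_X ℂ _ _).add ((isWeightedHomogeneous_X ℂ _ _).C_mul _)
    · subst h₂
      exact (isWeightedHomogeneous_X ℂ _ _).sub ((isWeightedHomogeneous_X ℂ _ _).C_mul _)
    · exact isWeightedHomogeneous_X ℂ _ _
  have hXD : (X w ^ D : MvPolynomial (FVars N) ℂ).IsWeightedHomogeneous (zWeight N) D := by
    simpa using
      (isWeightedHomogeneous_X_of_eq (R := ℂ) (w := zWeight N) (i := w) (m := 1) rfl).pow D
  obtain ⟨k, hM, hk⟩ := hXD.exists_of_mul_left (pow_ne_zero _ (X_ne_zero _)) hXM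
    (fun h => hMmax (h ▸ dvd_zero _))
  obtain ⟨c, hc, hcM⟩ := hUFC
  have hcA1 : (C c * PderA1).IsWeightedHomogeneous (zWeight N) k := by
    rw [← hcM]
    refine hM.aeval fun v => ?_
    split_ifs
    · exact isWeightedHomogeneous_zero ℂ _ _
    · exact isWeightedHomogeneous_X ℂ _ _
  obtain ⟨k', hk', hkk'⟩ := (isWeightedHomogeneous_C (zWeight N) c).exists_of_mul_left
    (C_ne_zero.mpr hc) hcA1 hA1_ne
  have := IsWeightedHomogeneous.inj_right hA1_ne hk' hA1
  have := minDeg_le_of_isHomogeneous hP hhom a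
  have := minDeg_le_of_isHomogeneous hP hhom (a + 1)
  omega

/-- for a homogeneous symmetric translation invariant polynomial
admitting derived polynomials for fusions of initial segments (sUFC),
`D_{a,1} = S_{a+1} - S_a`. Here `PderA` is the derived polynomial from fusing the
first `a` variables, `D` is its order of vanishing along `z^{(a)} = z_{a+1}`, and
the sUFC hypothesis `hUFC` says that fusing `z^{(a)}` with `z_{a+1}` in `PderA`
(rewriting in `w = z^{(a)} - z_{a+1}` and the center of mass
`z^{(a+1)} = (a z^{(a)} + z_{a+1})/(a+1)`, extracting the coefficient of `w^D`)
recovers, up to a nonzero scalar, the derived polynomial `PderA1` of the direct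
fusion of the first `a+1` variables. The difference variable `w` is stored in the
slot of `z_{a+1}` and the center of mass in the slot `Sum.inr none`. -/
theorem stmt10 (N a d : ℕ) (haN : a + 1 ≤ N) (P : MvPolynomial (Fin N) ℂ)
    (hP : P ≠ 0) (hhom : P.IsHomogeneous d) (hsymm : SymmPoly N P) (hTI : TransInv N P)
    (RA PderA : MvPolynomial (FVars N) ℂ)
    (hRA : ∀ v ∈ RA.vars, ∃ i, v = Sum.inl i)
    (hPdA : ∀ v ∈ PderA.vars, ∃ o, v = Sum.inr o)
    (hfacA : Qcoeff N a P (minDeg N P a) = RA * PderA)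
    (RA1 PderA1 : MvPolynomial (FVars N) ℂ)
    (hRA1 : ∀ v ∈ RA1.vars, ∃ i, v = Sum.inl i)
    (hPdA1 : ∀ v ∈ PderA1.vars, ∃ o, v = Sum.inr o)
    (hfacA1 : Qcoeff N (a + 1) P (minDeg N P (a + 1)) = RA1 * PderA1)
    (D : ℕ) (M : MvPolynomial (FVars N) ℂ)
    (hchi : MvPolynomial.aeval (fun v : FVars N =>
        if v = Sum.inr none then
          X (Sum.inr none) +
            MvPolynomial.C ((1 : ℂ) / (a + 1)) * X (Sum.inr (some ⟨a, haN⟩))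
        else if v = Sum.inr (some ⟨a, haN⟩) then
          X (Sum.inr none) -
            MvPolynomial.C ((a : ℂ) / (a + 1)) * X (Sum.inr (some ⟨a, haN⟩))
        else X v) PderA = X (Sum.inr (some ⟨a, haN⟩)) ^ D * M)
    (hMmax : ¬ (X (Sum.inr (some ⟨a, haN⟩)) : MvPolynomial (FVars N) ℂ) ∣ M)
    (hUFC : ∃ c : ℂ, c ≠ 0 ∧
      MvPolynomial.aeval (fun v : FVars N =>
          if v = Sum.inr (some ⟨a, haN⟩) then 0 else X v) M =
        MvPolynomial.C c * PderA1) :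
    D + minDeg N P a = minDeg N P (a + 1) :=
  stmt10_general N a d haN P hP hhom hTI RA PderA hRA hfacA RA1 PderA1 hRA1 hfacA1 D M hchi hMmax
    hUFC
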